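/- Fix λ ∈ k. Define the one-step rewriting relation →_Π on V = 𝔖(Z) →₀ k (the rewriting system of the Rota-Baxter operator identity ⌊x⌋⌊y⌋ = ⌊x⌊y⌋⌋ + ⌊⌊x⌋y⌋ + λ⌊xy⌋ of weight λ): f →_Π g iff there exist a context q and nonempty bracketed words u, v such that the word t := q[⌊u⌋ ++ ⌊v⌋] lies in supp(f) and g = f − f(t)·δ_t + f(t)·( δ_{q[⌊u ++ ⌊v⌋⌋]} + δ_{q[⌊⌊u⌋ ++ v⌋]} + λ·δ_{q[⌊u ++ v⌋]} ). Then →_Π is convergent (terminating and confluent). -/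

import Mathlib

/-!
Termination: give letters and words the weight `φ(z) = 2`, `φ(⌊w⌋) = φ(w) + 1`,
`φ(uv) = φ(u) φ(v)`. Each of the three words produced by a rewriting step is lighter than the
word it replaces, also inside any context, so `∑_{w ∈ supp f} 4 ^ φ(w)` decreases.

Confluence: the free Rota-Baxter algebra of weight `λ` has as basis the words with no factor
`⌊x⌋⌊y⌋` at any depth, and its product `⋄` concatenates two such words, except that a last letter
`⌊a⌋` meeting a first letter `⌊b⌋` becomes `⌊a ⋄ ⌊b⌋ + ⌊a⌋ ⋄ b + λ a ⋄ b⌋`. Once `⋄` is known to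
be associative, evaluating bracketed words in this algebra is a linear invariant of rewriting
that fixes irreducible elements, so each element reaches at most one irreducible element.
Associativity reduces, through concatenation, to triples of letters; the only nontrivial one,
`⌊a⌋⌊b⌋⌊d⌋`, follows from the Rota-Baxter identity and associativity on lighter triples.
-/

/-- Bracketed letters on `Z`: either a generator, or the letter `⌊w⌋` obtained by
applying the formal operator `⌊ ⌋` to a nonempty word `w = h :: t`. -/
inductive BLtr (Z : Type*) where
  | of : Z → BLtr Z
  | flr : BLtr Z → List (BLtr Z) → BLtr Z

/-- Bracketed words on `Z`: nonempty lists of bracketed letters. -/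
def BWord (Z : Type*) := {l : List (BLtr Z) // l ≠ []}

/-- Concatenation of bracketed words. -/
def BWord.cat {Z : Type*} (u v : BWord Z) : BWord Z :=
  ⟨u.1 ++ v.1, by
    intro h
    rcases List.append_eq_nil_iff.mp h with ⟨h1, _⟩
    exact u.2 h1⟩

/-- `⌊w⌋`: the one-letter word obtained by applying the formal operator to `w`. -/
def BWord.flr {Z : Type*} (w : BWord Z) : BWord Z :=
  ⟨[BLtr.flr (w.1.head w.2) w.1.tail], by simp⟩

/-- Contexts (`⋆`-words) on `Z`. -/
inductive Ctx (Z : Type*) where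
  | base : List (BLtr Z) → List (BLtr Z) → Ctx Z
  | deep : List (BLtr Z) → List (BLtr Z) → Ctx Z → Ctx Z

/-- Substitution of a bracketed word into a context. -/
def Ctx.subst {Z : Type*} : Ctx Z → BWord Z → BWord Z
  | .base l r, u => ⟨l ++ u.1 ++ r, by
      intro h
      rcases List.append_eq_nil_iff.mp h with ⟨h1, _⟩
      rcases List.append_eq_nil_iff.mp h1 with ⟨_, h2⟩
      exact u.2 h2⟩
  | .deep l r q, u => ⟨l ++ (BWord.flr (q.subst u)).1 ++ r, by
      intro h
      rcases List.append_eq_nil_iff.mp h with ⟨h1, _⟩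
      rcases List.append_eq_nil_iff.mp h1 with ⟨_, h2⟩
      exact (BWord.flr (q.subst u)).2 h2⟩

/-- Termination of a binary relation: no infinite chain of one-step rewritings. -/
def RelTerminating {V : Type*} (r : V → V → Prop) : Prop :=
  ¬ ∃ f : ℕ → V, ∀ n, r (f n) (f (n + 1))

/-- Confluence of a binary relation. -/
def RelConfluent {V : Type*} (r : V → V → Prop) : Prop :=
  ∀ f g₁ g₂ : V, Relation.ReflTransGen r f g₁ → Relation.ReflTransGen r f g₂ →
    ∃ h, Relation.ReflTransGen r g₁ h ∧ Relation.ReflTransGen r g₂ h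

/-- One-step rewriting relation of the Rota-Baxter identity
`⌊x⌋⌊y⌋ = ⌊x⌊y⌋⌋ + ⌊⌊x⌋y⌋ + λ⌊xy⌋` of weight `λ`. -/
def RBStep {Z k : Type*} [Field k] (lam : k) (f g : BWord Z →₀ k) : Prop :=
  ∃ (q : Ctx Z) (u v : BWord Z),
    f (q.subst ((u.flr).cat v.flr)) ≠ 0 ∧
    g = f - Finsupp.single (q.subst ((u.flr).cat v.flr)) (f (q.subst ((u.flr).cat v.flr)))
        + f (q.subst ((u.flr).cat v.flr)) •
          (Finsupp.single (q.subst (BWord.flr (u.cat v.flr))) (1 : k)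
            + Finsupp.single (q.subst (BWord.flr ((u.flr).cat v))) (1 : k)
            + lam • Finsupp.single (q.subst (BWord.flr (u.cat v))) (1 : k))

section AbstractRewriting

variable {V : Type*} {r : V → V → Prop}

theorem relTerminating_of_wellFounded (hwf : WellFounded (flip r)) : RelTerminating r :=
  fun ⟨f, hf⟩ => (wellFounded_iff_isEmpty_descending_chain.1 hwf).elim ⟨f, hf⟩

theorem exists_reflTransGen_irreducible (hwf : WellFounded (flip r)) (f : V) :
    ∃ g, Relation.ReflTransGen r f g ∧ ∀ h, ¬ r g h := by
  induction f using hwf.induction with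
  | _ f ih =>
    by_cases hf : ∃ g, r f g
    · obtain ⟨g, hfg⟩ := hf
      obtain ⟨h, hgh, hh⟩ := ih g hfg
      exact ⟨h, .head hfg hgh, hh⟩
    · exact ⟨f, .refl, fun g hfg => hf ⟨g, hfg⟩⟩

theorem relConfluent_of_invariant {X : Type*} (hwf : WellFounded (flip r)) (N : V → X)
    (hN : ∀ f g, r f g → N g = N f)
    (hinj : ∀ f g, (∀ h, ¬ r f h) → (∀ h, ¬ r g h) → N f = N g → f = g) :
    RelConfluent r := by
  have hN' : ∀ f g, Relation.ReflTransGen r f g → N g = N f := fun f g hfg => by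
    induction hfg with
    | refl => rfl
    | tail _ hstep ih => rw [hN _ _ hstep, ih]
  intro f g₁ g₂ h₁ h₂
  obtain ⟨e₁, he₁, hirr₁⟩ := exists_reflTransGen_irreducible hwf g₁
  obtain ⟨e₂, he₂, hirr₂⟩ := exists_reflTransGen_irreducible hwf g₂
  have he : e₁ = e₂ := hinj e₁ e₂ hirr₁ hirr₂ <| by
    rw [hN' _ _ he₁, hN' _ _ he₂, hN' _ _ h₁, hN' _ _ h₂]
  exact ⟨e₁, he₁, he ▸ he₂⟩

theorem wellFounded_flip_of_measure_lt (μ : V → ℕ) (hμ : ∀ f g, r f g → μ g < μ f) :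
    WellFounded (flip r) :=
  Subrelation.wf (fun {g f} h => hμ f g h) (measure μ).wf

end AbstractRewriting

theorem Finset.sum_pow_lt_of_subset_erase_union {α : Type*} [DecidableEq α] {s s' S : Finset α}
    {t : α} {b : ℕ} (φ : α → ℕ) (ht : t ∈ s) (hs' : s' ⊆ s.erase t ∪ S) (hS : S.card < b)
    (hlt : ∀ x ∈ S, φ x < φ t) : ∑ x ∈ s', b ^ φ x < ∑ x ∈ s, b ^ φ x := by
  have hb : 0 < b := by omega
  have hSt : ∑ x ∈ S, b ^ φ x < b ^ φ t := by
    rcases S.eq_empty_or_nonempty with rfl | ⟨x, hx⟩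
    · simpa using pow_pos hb _
    have hφt : φ t = φ t - 1 + 1 := by have := hlt x hx; omega
    calc ∑ x ∈ S, b ^ φ x ≤ S.card • b ^ (φ t - 1) :=
          Finset.sum_le_card_nsmul _ _ _ fun y hy => Nat.pow_le_pow_right (by omega) (by
            have := hlt y hy; omega)
      _ < b * b ^ (φ t - 1) := by
          rw [smul_eq_mul]; exact Nat.mul_lt_mul_of_pos_right hS (pow_pos hb _)
      _ = b ^ φ t := by rw [hφt, pow_succ', Nat.add_sub_cancel]
  have hunion := Finset.sum_union_inter (s₁ := s.erase t) (s₂ := S) (f := fun x => b ^ φ x)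
  calc ∑ x ∈ s', b ^ φ x ≤ ∑ x ∈ s.erase t ∪ S, b ^ φ x := Finset.sum_le_sum_of_subset hs'
    _ < ∑ x ∈ s.erase t, b ^ φ x + b ^ φ t := by omega
    _ = ∑ x ∈ s, b ^ φ x := Finset.sum_erase_add _ _ ht

namespace RotaBaxter

open Finsupp

variable {Z : Type*}

/-- Possibly empty bracketed words; `[]` will be the unit of the free Rota-Baxter algebra. -/
abbrev Word (Z : Type*) := List (BLtr Z)

/-- `⌊w⌋` as a word, with the junk value `⌊[]⌋ = []`. -/
def bracket : Word Z → Word Z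
  | [] => []
  | h :: t => [BLtr.flr h t]

@[simp] lemma bracket_cons (h : BLtr Z) (t : Word Z) : bracket (h :: t) = [BLtr.flr h t] := rfl

lemma bracket_ne_nil {w : Word Z} (hw : w ≠ []) : bracket w ≠ [] := by
  cases w <;> simp_all

lemma bracket_injective : Function.Injective (bracket : Word Z → Word Z) := by
  rintro (_ | _) (_ | _) h <;> simp_all [bracket]

lemma BWord.flr_val (w : BWord Z) : (BWord.flr w).1 = bracket w.1 := by
  obtain ⟨_ | ⟨h, t⟩, hw⟩ := w
  · exact absurd rfl hw
  · rfl

lemma BWord.cat_val (u v : BWord Z) : (u.cat v).1 = u.1 ++ v.1 := rfl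

lemma Ctx.subst_base_val (l r : Word Z) (u : BWord Z) :
    ((Ctx.base l r).subst u).1 = l ++ u.1 ++ r := rfl

lemma Ctx.subst_deep_val (l r : Word Z) (q : Ctx Z) (u : BWord Z) :
    ((Ctx.deep l r q).subst u).1 = l ++ bracket (q.subst u).1 ++ r :=
  congrArg (l ++ · ++ r) (BWord.flr_val _)

mutual
  def letterWeight : BLtr Z → ℕ
    | .of _ => 2
    | .flr h t => letterWeight h * weight t + 1
  def weight : Word Z → ℕ
    | [] => 1
    | l :: w => letterWeight l * weight w
end

@[simp] lemma weight_nil : weight ([] : Word Z) = 1 := by rw [weight]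

@[simp] lemma weight_cons (l : BLtr Z) (w : Word Z) :
    weight (l :: w) = letterWeight l * weight w := by
  rw [weight]

@[simp] lemma letterWeight_flr (h : BLtr Z) (t : Word Z) :
    letterWeight (.flr h t) = weight (h :: t) + 1 := by
  rw [letterWeight, weight_cons]

@[simp] lemma weight_append (u v : Word Z) : weight (u ++ v) = weight u * weight v := by
  induction u with
  | nil => simp
  | cons l u ih => simp [ih, Nat.mul_assoc]

lemma letterWeight_pos (l : BLtr Z) : 0 < letterWeight l := by
  cases l <;> simp [letterWeight]

lemma weight_pos (w : Word Z) : 0 < weight w := by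
  induction w with
  | nil => simp
  | cons l w ih => simpa using Nat.mul_pos (letterWeight_pos l) ih

lemma weight_bracket {w : Word Z} (hw : w ≠ []) : weight (bracket w) = weight w + 1 := by
  obtain ⟨l, w, rfl⟩ := List.exists_cons_of_ne_nil hw
  simp

lemma weight_le_of_mem {l : BLtr Z} {w : Word Z} (hl : l ∈ w) : weight [l] ≤ weight w := by
  obtain ⟨s, t, rfl⟩ := List.append_of_mem hl
  simp only [weight_append, weight_cons, weight_nil, Nat.mul_one]
  exact Nat.le_mul_of_pos_left _ (weight_pos s) |>.trans
    (Nat.mul_le_mul_left _ (Nat.le_mul_of_pos_right _ (weight_pos t)))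

lemma weight_reverse (w : Word Z) : weight w.reverse = weight w := by
  induction w with
  | nil => simp
  | cons l w ih => simp [ih, Nat.mul_comm]

section Bilinear

variable {k : Type*} [CommSemiring k]

noncomputable def bilin {α β M : Type*} [AddCommMonoid M] [Module k M] (b : α → β → M) :
    (α →₀ k) →ₗ[k] (β →₀ k) →ₗ[k] M :=
  linearCombination k fun a => linearCombination k (b a)

@[simp] lemma bilin_single {α β M : Type*} [AddCommMonoid M] [Module k M] (b : α → β → M)
    (a : α) (x : k) (c : β) (y : k) : bilin b (single a x) (single c y) = (x * y) • b a c := by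
  simp [bilin, mul_smul, smul_comm x y]

lemma apply_eq_of_forall_mem_support {α M : Type*} [AddCommMonoid M] [Module k M]
    {L₁ L₂ : (α →₀ k) →ₗ[k] M} {F : α →₀ k}
    (h : ∀ a ∈ F.support, L₁ (single a 1) = L₂ (single a 1)) : L₁ F = L₂ F := by
  rw [← F.sum_single, map_finsuppSum, map_finsuppSum]
  refine sum_congr fun a ha => ?_
  rw [← smul_single_one, map_smul, map_smul, h a ha]

end Bilinear

section Algebra

variable {k : Type*} [CommSemiring k] (lam : k)

noncomputable def catMul : (Word Z →₀ k) →ₗ[k] (Word Z →₀ k) →ₗ[k] (Word Z →₀ k) :=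
  bilin fun x y => single (x ++ y) 1

/-- The Rota-Baxter operator `P`. -/
noncomputable def bracketOp : (Word Z →₀ k) →ₗ[k] (Word Z →₀ k) := lmapDomain k k bracket

/-- The product `⋄` on words, with the left factor given reversed so that its last letter can be
matched. -/
noncomputable def mulAux : Word Z → Word Z → (Word Z →₀ k)
  | ru, [] => single ru.reverse 1
  | .flr ha ta :: ru, .flr hb tb :: v =>
      mapDomain (fun x => ru.reverse ++ bracket x ++ v)
        (mulAux (ha :: ta).reverse [.flr hb tb] + mulAux [.flr ha ta] (hb :: tb)
          + lam • mulAux (ha :: ta).reverse (hb :: tb))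
  | ru, b :: v => single (ru.reverse ++ b :: v) 1
  termination_by ru v => weight ru * weight v
  decreasing_by
  all_goals
    simp only [weight_reverse, weight_cons (BLtr.flr _ _), weight_nil, letterWeight_flr]
    refine lt_of_lt_of_le ?_ (Nat.mul_le_mul (Nat.le_mul_of_pos_right _ (weight_pos ru))
      (Nat.le_mul_of_pos_right _ (weight_pos v)))
    nlinarith [weight_pos (ha :: ta), weight_pos (hb :: tb)]

noncomputable def mulWord (u v : Word Z) : Word Z →₀ k := mulAux lam u.reverse v

noncomputable def rbTerm (a b : Word Z) : Word Z →₀ k :=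
  mulWord lam a (bracket b) + mulWord lam (bracket a) b + lam • mulWord lam a b

noncomputable def rbMul : (Word Z →₀ k) →ₗ[k] (Word Z →₀ k) →ₗ[k] (Word Z →₀ k) :=
  bilin (mulWord lam)

variable {lam}

@[simp] lemma catMul_single_single (x y : Word Z) (a b : k) :
    catMul (single x a) (single y b) = single (x ++ y) (a * b) := by
  simp [catMul]

lemma single_append (x y : Word Z) :
    single (x ++ y) (1 : k) = catMul (single x 1) (single y 1) := by
  simp

lemma catMul_single_left (x : Word Z) (F : Word Z →₀ k) :
    catMul (single x 1) F = mapDomain (x ++ ·) F := by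
  have : catMul (single x (1 : k)) = lmapDomain k k (x ++ ·) := by
    ext y
    simp [catMul, mapDomain_single]
  rw [this, lmapDomain_apply]

lemma catMul_single_right (F : Word Z →₀ k) (z : Word Z) :
    catMul F (single z 1) = mapDomain (· ++ z) F := by
  have : (catMul (k := k)).flip (single z 1) = lmapDomain k k (· ++ z) := by
    ext y
    simp [catMul, mapDomain_single]
  rw [← LinearMap.flip_apply, this, lmapDomain_apply]

@[simp] lemma bracketOp_single (w : Word Z) (a : k) :
    bracketOp (single w a) = single (bracket w) a := by
  simp [bracketOp, mapDomain_single]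

@[simp] lemma bracketOp_apply_nil (F : Word Z →₀ k) : bracketOp F [] = F [] :=
  mapDomain_apply bracket_injective F []

@[simp] lemma mulWord_nil_right (u : Word Z) : mulWord lam u [] = single u (1 : k) := by
  simp [mulWord, mulAux]

@[simp] lemma mulWord_nil_left (v : Word Z) : mulWord lam [] v = single v (1 : k) := by
  cases v <;> simp [mulWord, mulAux]

lemma mulWord_bracket_bracket {a b : Word Z} (ha : a ≠ []) (hb : b ≠ []) :
    mulWord lam (bracket a) (bracket b) = bracketOp (rbTerm lam a b) := by
  obtain ⟨ha, ta, rfl⟩ := List.exists_cons_of_ne_nil ha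
  obtain ⟨hb, tb, rfl⟩ := List.exists_cons_of_ne_nil hb
  simp [mulWord, mulAux, rbTerm, bracketOp]

lemma mulWord_of_left (z : Z) (l : BLtr Z) :
    mulWord lam [.of z] [l] = single [.of z, l] (1 : k) := by
  simp [mulWord, mulAux]

lemma mulWord_of_right (l : BLtr Z) (z : Z) :
    mulWord lam [l] [.of z] = single [l, .of z] (1 : k) := by
  cases l <;> simp [mulWord, mulAux]

lemma mulWord_concat_cons (u : Word Z) (l₁ l₂ : BLtr Z) (v : Word Z) :
    mulWord lam (u ++ [l₁]) (l₂ :: v) =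
      mapDomain (fun x => u ++ x ++ v) (mulWord lam [l₁] [l₂]) := by
  cases l₁ <;> cases l₂ <;> simp [mulWord, mulAux, ← mapDomain_comp, Function.comp_def]

lemma mulWord_append_left (x : Word Z) {y : Word Z} (hy : y ≠ []) (z : Word Z) :
    mulWord lam (x ++ y) z = catMul (single x 1) (mulWord lam y z) := by
  rw [catMul_single_left]
  obtain ⟨y, l₁, rfl⟩ := (List.eq_nil_or_concat' y).resolve_left hy
  rcases z with _ | ⟨l₂, z⟩
  · simp [mapDomain_single]
  · simp only [← List.append_assoc, mulWord_concat_cons,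
      ← mapDomain_comp]
    congr 1
    funext w
    simp

lemma mulWord_append_right (x : Word Z) {y : Word Z} (hy : y ≠ []) (z : Word Z) :
    mulWord lam x (y ++ z) = catMul (mulWord lam x y) (single z 1) := by
  rw [catMul_single_right]
  obtain ⟨l₂, y, rfl⟩ := List.exists_cons_of_ne_nil hy
  rcases List.eq_nil_or_concat' x with rfl | ⟨x, l₁, rfl⟩
  · simp [mapDomain_single]
  · simp only [List.cons_append, mulWord_concat_cons,
      ← mapDomain_comp]
    congr 1
    funext w
    simp

lemma mapDomain_apply_nil {g : Word Z → Word Z} (hg : ∀ x ≠ [], g x ≠ []) {F : Word Z →₀ k}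
    (hF : F [] = 0) : mapDomain g F [] = 0 := by
  classical
  refine notMem_support_iff.1 fun h => ?_
  obtain ⟨x, hx, hgx⟩ := Finset.mem_image.1 (mapDomain_support h)
  exact hg x (fun hx0 => mem_support_iff.1 hx (hx0 ▸ hF)) hgx

lemma mulAux_apply_nil (ru v : Word Z) (huv : ru ≠ [] ∨ v ≠ []) : mulAux lam ru v [] = 0 := by
  induction ru, v using mulAux.induct with
  | case1 ru =>
    rw [mulAux]
    exact single_eq_of_ne' (by simpa using huv)
  | case2 ha ta ru hb tb v ih₁ ih₂ ih₃ =>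
    rw [mulAux]
    refine mapDomain_apply_nil (fun x hx => by simp [bracket_ne_nil hx]) ?_
    rw [Finsupp.add_apply, Finsupp.add_apply, Finsupp.smul_apply, ih₁ (by simp), ih₂ (by simp),
      ih₃ (by simp)]
    simp
  | case3 ru b v hnot =>
    rw [mulAux]
    · simp
    · exact hnot

lemma mulWord_apply_nil {u v : Word Z} (huv : u ≠ [] ∨ v ≠ []) : mulWord lam u v [] = 0 :=
  mulAux_apply_nil _ _ (by simpa using huv)

lemma rbTerm_apply_nil {a b : Word Z} (ha : a ≠ []) : rbTerm lam a b [] = 0 := by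
  simp [rbTerm, mulWord_apply_nil, ha, bracket_ne_nil ha]

lemma apply_eq_of_apply_nil_eq_zero {M : Type*} [AddCommMonoid M] [Module k M]
    {L₁ L₂ : (Word Z →₀ k) →ₗ[k] M} {F : Word Z →₀ k} (hF : F [] = 0)
    (h : ∀ y ≠ [], L₁ (single y 1) = L₂ (single y 1)) : L₁ F = L₂ F :=
  apply_eq_of_forall_mem_support fun y hy => h y fun hy0 => mem_support_iff.1 hy (hy0 ▸ hF)

@[simp] lemma rbMul_single_single (u v : Word Z) (a b : k) :
    rbMul lam (single u a) (single v b) = (a * b) • mulWord lam u v :=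
  bilin_single _ _ _ _ _

lemma one_rbMul (F : Word Z →₀ k) : rbMul lam (single [] 1) F = F := by
  have : rbMul lam (single ([] : Word Z) 1) = LinearMap.id := by
    ext v
    simp
  rw [this, LinearMap.id_apply]

lemma rbMul_one (F : Word Z →₀ k) : rbMul lam F (single [] 1) = F := by
  have : (rbMul lam).flip (single ([] : Word Z) 1) = LinearMap.id := by
    ext u
    simp
  rw [← LinearMap.flip_apply, this, LinearMap.id_apply]

lemma rbMul_apply_nil (F G : Word Z →₀ k) : rbMul lam F G [] = F [] * G [] := by
  induction F using Finsupp.induction_linear with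
  | zero => simp
  | add F₁ F₂ h₁ h₂ => simp [h₁, h₂, add_mul]
  | single u a =>
    induction G using Finsupp.induction_linear with
    | zero => simp
    | add G₁ G₂ h₁ h₂ => simp [h₁, h₂, mul_add]
    | single v b =>
      by_cases huv : u = [] ∧ v = []
      · simp [huv.1, huv.2]
      · rw [not_and_or] at huv
        rcases huv with hu | hv <;> simp [mulWord_apply_nil, single_apply, *]

lemma rbMul_catMul_left (E G : Word Z →₀ k) {F : Word Z →₀ k} (hF : F [] = 0) :
    rbMul lam (catMul E F) G = catMul E (rbMul lam F G) := by
  refine apply_eq_of_forall_mem_support (L₁ := (rbMul lam).flip G ∘ₗ catMul.flip F)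
    (L₂ := catMul.flip (rbMul lam F G)) fun x _ => ?_
  refine apply_eq_of_forall_mem_support (L₁ := rbMul lam (catMul (single x 1) F))
    (L₂ := catMul (single x 1) ∘ₗ rbMul lam F) fun z _ => ?_
  refine apply_eq_of_apply_nil_eq_zero (L₁ := (rbMul lam).flip (single z 1) ∘ₗ catMul (single x 1))
    (L₂ := catMul (single x 1) ∘ₗ (rbMul lam).flip (single z 1)) hF fun y hy => ?_
  simp [catMul, mulWord_append_left x hy]

lemma rbMul_catMul_right (E H : Word Z →₀ k) {F : Word Z →₀ k} (hF : F [] = 0) :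
    rbMul lam E (catMul F H) = catMul (rbMul lam E F) H := by
  refine apply_eq_of_forall_mem_support (L₁ := (rbMul lam).flip (catMul F H))
    (L₂ := catMul.flip H ∘ₗ (rbMul lam).flip F) fun x _ => ?_
  refine apply_eq_of_forall_mem_support (L₁ := rbMul lam (single x 1) ∘ₗ catMul F)
    (L₂ := catMul (rbMul lam (single x 1) F)) fun z _ => ?_
  refine apply_eq_of_apply_nil_eq_zero (L₁ := rbMul lam (single x 1) ∘ₗ catMul.flip (single z 1))
    (L₂ := catMul.flip (single z 1) ∘ₗ rbMul lam (single x 1)) hF fun y hy => ?_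
  simp [catMul, mulWord_append_right x hy]

lemma rbMul_bracketOp_bracketOp {F G : Word Z →₀ k} (hF : F [] = 0) (hG : G [] = 0) :
    rbMul lam (bracketOp F) (bracketOp G) = bracketOp (rbMul lam F (bracketOp G)
      + rbMul lam (bracketOp F) G + lam • rbMul lam F G) := by
  refine apply_eq_of_apply_nil_eq_zero (L₁ := (rbMul lam).flip (bracketOp G) ∘ₗ bracketOp)
    (L₂ := bracketOp ∘ₗ ((rbMul lam).flip (bracketOp G) + (rbMul lam).flip G ∘ₗ bracketOp
      + lam • (rbMul lam).flip G)) hF fun x hx => ?_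
  refine apply_eq_of_apply_nil_eq_zero (L₁ := rbMul lam (bracketOp (single x 1)) ∘ₗ bracketOp)
    (L₂ := bracketOp ∘ₗ (rbMul lam (single x 1) ∘ₗ bracketOp + rbMul lam (bracketOp (single x 1))
      + lam • rbMul lam (single x 1))) hG fun y hy => ?_
  simp [mulWord_bracket_bracket hx hy, rbTerm]

lemma rbMul_of_left (z : Z) (F : Word Z →₀ k) :
    rbMul lam (single [.of z] 1) F = catMul (single [.of z] 1) F := by
  refine apply_eq_of_forall_mem_support fun y _ => ?_
  rcases y with _ | ⟨l, y⟩
  · simp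
  · simpa [mapDomain_single, mulWord_of_left] using mulWord_concat_cons (lam := lam) [] (.of z) l y

lemma rbMul_of_right (z : Z) (F : Word Z →₀ k) :
    rbMul lam F (single [.of z] 1) = catMul F (single [.of z] 1) := by
  refine apply_eq_of_forall_mem_support (L₁ := (rbMul lam).flip _) (L₂ := catMul.flip _)
    fun x _ => ?_
  rcases List.eq_nil_or_concat' x with rfl | ⟨x, l, rfl⟩
  · simp
  · simpa [mapDomain_single, mulWord_of_right] using mulWord_concat_cons (lam := lam) x l (.of z) []

end Algebra

section Associativity

variable {k : Type*} [CommSemiring k] {lam : k}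

variable (lam) in
def AssocAt (u v w : Word Z) : Prop :=
  rbMul lam (mulWord lam u v) (single w 1) = rbMul lam (single u 1) (mulWord lam v w)

lemma assocAt_of_nil {u v w : Word Z} (h : u = [] ∨ v = [] ∨ w = []) : AssocAt lam u v w := by
  rcases h with rfl | rfl | rfl <;> simp [AssocAt, one_rbMul, rbMul_one]

lemma assocAt_append_middle (u : Word Z) {v₁ v₂ : Word Z} (hv₁ : v₁ ≠ []) (hv₂ : v₂ ≠ [])
    (w : Word Z) : AssocAt lam u (v₁ ++ v₂) w := by
  rw [AssocAt, mulWord_append_right u hv₁, mulWord_append_left v₁ hv₂,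
    rbMul_catMul_left _ _ (by simp [hv₂]), rbMul_catMul_right _ _ (by simp [hv₁])]
  simp

lemma assocAt_append_left (u₀ : Word Z) {u v w : Word Z} (hu : u ≠ []) (h : AssocAt lam u v w) :
    AssocAt lam (u₀ ++ u) v w := by
  rw [AssocAt, mulWord_append_left u₀ hu, rbMul_catMul_left _ _ (mulWord_apply_nil (.inl hu)),
    single_append, rbMul_catMul_left _ _ (by simp [hu]), h]

lemma assocAt_append_right {u v w : Word Z} (w₀ : Word Z) (hw : w ≠ []) (h : AssocAt lam u v w) :
    AssocAt lam u v (w ++ w₀) := by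
  rw [AssocAt, mulWord_append_right v hw, rbMul_catMul_right _ _ (mulWord_apply_nil (.inr hw)),
    single_append, rbMul_catMul_right _ _ (by simp [hw]), ← h]

lemma assocAt_of_letters {u v w : Word Z}
    (h : ∀ l₁ ∈ u, ∀ l₂ ∈ v, ∀ l₃ ∈ w, AssocAt lam [l₁] [l₂] [l₃]) : AssocAt lam u v w := by
  rcases v with _ | ⟨l₂, _ | ⟨l₂', v⟩⟩
  · exact assocAt_of_nil (by simp)
  · rcases List.eq_nil_or_concat' u with rfl | ⟨u, l₁, rfl⟩
    · exact assocAt_of_nil (by simp)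
    rcases w with _ | ⟨l₃, w⟩
    · exact assocAt_of_nil (by simp)
    exact assocAt_append_left u (by simp) <| assocAt_append_right (w := [l₃]) w (by simp) <|
      h l₁ (by simp) l₂ (by simp) l₃ (by simp)
  · exact assocAt_append_middle (v₁ := [l₂]) u (by simp) (by simp) w

lemma assocAt_of_left (z : Z) (l₂ l₃ : BLtr Z) : AssocAt lam [.of z] [l₂] [l₃] := by
  rw [AssocAt, mulWord_of_left, rbMul_of_left]
  simpa using mulWord_append_left (lam := lam) [.of z] (y := [l₂]) (by simp) [l₃]

lemma assocAt_of_middle (l₁ : BLtr Z) (z : Z) (l₃ : BLtr Z) : AssocAt lam [l₁] [.of z] [l₃] := by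
  have h₁ := mulWord_append_left (lam := lam) [l₁] (y := [.of z]) (by simp) [l₃]
  have h₂ := mulWord_append_right (lam := lam) [l₁] (y := [.of z]) (by simp) [l₃]
  simp only [List.cons_append, List.nil_append, mulWord_of_left,
    mulWord_of_right, catMul_single_single] at h₁ h₂
  simp [AssocAt, mulWord_of_left, mulWord_of_right, h₁, h₂]

lemma assocAt_of_right (l₁ l₂ : BLtr Z) (z : Z) : AssocAt lam [l₁] [l₂] [.of z] := by
  rw [AssocAt, mulWord_of_right, rbMul_of_right]
  simpa using (mulWord_append_right (lam := lam) [l₁] (y := [l₂]) (by simp) [.of z]).symm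

/-- The only genuine overlap: expanding `⌊a⌋⌊b⌋⌊d⌋` by the Rota-Baxter identity from either
side yields the same seven triple products, up to associativity on lighter triples. -/
lemma assocAt_bracket {a b d : Word Z} (ha : a ≠ []) (hb : b ≠ []) (hd : d ≠ [])
    (ih : ∀ u v w : Word Z, weight u + weight v + weight w
      < weight (bracket a) + weight (bracket b) + weight (bracket d) → AssocAt lam u v w) :
    AssocAt lam (bracket a) (bracket b) (bracket d) := by
  have := weight_bracket ha
  have := weight_bracket hb
  have := weight_bracket hd
  have h₁ : AssocAt lam a (bracket b) (bracket d) := ih _ _ _ (by omega)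
  have h₂ : AssocAt lam (bracket a) b (bracket d) := ih _ _ _ (by omega)
  have h₃ : AssocAt lam a b (bracket d) := ih _ _ _ (by omega)
  have h₄ : AssocAt lam (bracket a) (bracket b) d := ih _ _ _ (by omega)
  have h₅ : AssocAt lam a (bracket b) d := ih _ _ _ (by omega)
  have h₆ : AssocAt lam (bracket a) b d := ih _ _ _ (by omega)
  have h₇ : AssocAt lam a b d := ih _ _ _ (by omega)
  have hL : rbMul lam (mulWord lam (bracket a) (bracket b)) (single (bracket d) 1) =
      bracketOp (rbMul lam (rbTerm lam a b) (single (bracket d) 1)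
        + rbMul lam (mulWord lam (bracket a) (bracket b)) (single d 1)
        + lam • rbMul lam (rbTerm lam a b) (single d 1)) := by
    rw [mulWord_bracket_bracket ha hb, ← bracketOp_single,
      rbMul_bracketOp_bracketOp (rbTerm_apply_nil ha) (by simp [hd]), bracketOp_single,
      ← mulWord_bracket_bracket ha hb]
  have hR : rbMul lam (single (bracket a) 1) (mulWord lam (bracket b) (bracket d)) =
      bracketOp (rbMul lam (single a 1) (mulWord lam (bracket b) (bracket d))
        + rbMul lam (single (bracket a) 1) (rbTerm lam b d)
        + lam • rbMul lam (single a 1) (rbTerm lam b d)) := by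
    rw [mulWord_bracket_bracket hb hd, ← bracketOp_single,
      rbMul_bracketOp_bracketOp (by simp [ha]) (rbTerm_apply_nil hb), bracketOp_single,
      ← mulWord_bracket_bracket hb hd]
  rw [AssocAt, hL, hR]
  unfold AssocAt at h₁ h₂ h₃ h₄ h₅ h₆ h₇
  simp only [rbTerm, map_add, map_smul, LinearMap.add_apply, LinearMap.smul_apply,
    h₁, h₂, h₃, h₄, h₅, h₆, h₇]
  module

lemma assocAt_letters (l₁ l₂ l₃ : BLtr Z)
    (ih : ∀ u v w : Word Z, weight u + weight v + weight w
      < weight [l₁] + weight [l₂] + weight [l₃] → AssocAt lam u v w) :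
    AssocAt lam [l₁] [l₂] [l₃] := by
  rcases l₁ with z | ⟨ha, ta⟩
  · exact assocAt_of_left z l₂ l₃
  rcases l₂ with z | ⟨hb, tb⟩
  · exact assocAt_of_middle _ z l₃
  rcases l₃ with z | ⟨hd, td⟩
  · exact assocAt_of_right _ _ z
  exact assocAt_bracket (a := ha :: ta) (b := hb :: tb) (d := hd :: td)
    (by simp) (by simp) (by simp) ih

theorem assocAt (u v w : Word Z) : AssocAt lam u v w := by
  induction hn : weight u + weight v + weight w using Nat.strong_induction_on
    generalizing u v w with
  | _ n ih =>
    refine assocAt_of_letters fun l₁ h₁ l₂ h₂ l₃ h₃ => assocAt_letters l₁ l₂ l₃ fun u' v' w' hlt =>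
      ih _ ?_ u' v' w' rfl
    have := weight_le_of_mem h₁
    have := weight_le_of_mem h₂
    have := weight_le_of_mem h₃
    omega

theorem rbMul_assoc (F G H : Word Z →₀ k) :
    rbMul lam (rbMul lam F G) H = rbMul lam F (rbMul lam G H) := by
  refine apply_eq_of_forall_mem_support (L₁ := (rbMul lam).flip H ∘ₗ (rbMul lam).flip G)
    (L₂ := (rbMul lam).flip (rbMul lam G H)) fun u _ => ?_
  refine apply_eq_of_forall_mem_support (L₁ := (rbMul lam).flip H ∘ₗ rbMul lam (single u 1))
    (L₂ := rbMul lam (single u 1) ∘ₗ (rbMul lam).flip H) fun v _ => ?_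
  refine apply_eq_of_forall_mem_support
    (L₁ := rbMul lam (rbMul lam (single u 1) (single v 1)))
    (L₂ := rbMul lam (single u 1) ∘ₗ rbMul lam (single v 1)) fun w _ => ?_
  simpa [AssocAt] using assocAt (lam := lam) u v w

end Associativity

section Evaluation

variable {k : Type*} [CommSemiring k] (lam : k)

noncomputable def eval : Word Z → (Word Z →₀ k)
  | [] => single [] 1
  | .of z :: w => rbMul lam (single [.of z] 1) (eval w)
  | .flr h t :: w => rbMul lam (bracketOp (eval (h :: t))) (eval w)
  termination_by w => sizeOf w
  decreasing_by all_goals simp; try omega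

variable {lam}

@[simp] lemma eval_nil : eval lam ([] : Word Z) = single [] 1 := by rw [eval]

lemma eval_bracket {w : Word Z} (hw : w ≠ []) :
    eval lam (bracket w) = bracketOp (eval lam w) := by
  obtain ⟨h, t, rfl⟩ := List.exists_cons_of_ne_nil hw
  rw [bracket_cons, eval, eval_nil, rbMul_one]

lemma eval_cons (l : BLtr Z) (w : Word Z) :
    eval lam (l :: w) = rbMul lam (eval lam [l]) (eval lam w) := by
  cases l <;> rw [eval, eval, eval_nil, rbMul_one]

lemma eval_append (x y : Word Z) : eval lam (x ++ y) = rbMul lam (eval lam x) (eval lam y) := by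
  induction x with
  | nil => rw [eval_nil, one_rbMul, List.nil_append]
  | cons l x ih => rw [List.cons_append, eval_cons, ih, ← rbMul_assoc, ← eval_cons]

lemma eval_apply_nil {w : Word Z} (hw : w ≠ []) : eval lam w [] = 0 := by
  induction w using eval.induct with
  | case1 => exact absurd rfl hw
  | case2 => simp [eval, rbMul_apply_nil]
  | case3 h t _ ih => simp [eval, rbMul_apply_nil, ih (List.cons_ne_nil h t)]

variable (lam) in
noncomputable def ctxMap : Ctx Z → (Word Z →₀ k) →ₗ[k] (Word Z →₀ k)
  | .base l r => (rbMul lam).flip (eval lam r) ∘ₗ rbMul lam (eval lam l)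
  | .deep l r q => (rbMul lam).flip (eval lam r) ∘ₗ rbMul lam (eval lam l) ∘ₗ bracketOp ∘ₗ ctxMap q

lemma eval_subst (q : Ctx Z) (u : BWord Z) :
    eval lam (q.subst u).1 = ctxMap lam q (eval lam u.1) := by
  induction q with
  | base l r => simp [ctxMap, Ctx.subst_base_val, eval_append, rbMul_assoc]
  | deep l r q ih =>
    simp [ctxMap, Ctx.subst_deep_val, eval_append, eval_bracket (q.subst u).2, ih, rbMul_assoc]

lemma eval_rbRewrite (x y : BWord Z) :
    eval lam (x.flr.cat y.flr).1 = eval lam (BWord.flr (x.cat y.flr)).1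
      + eval lam (BWord.flr (x.flr.cat y)).1 + lam • eval lam (BWord.flr (x.cat y)).1 := by
  have hx := x.2
  have hy := y.2
  simp only [BWord.cat_val, BWord.flr_val]
  rw [eval_append, eval_bracket hx, eval_bracket hy,
    eval_bracket (List.append_ne_nil_of_left_ne_nil hx _),
    eval_bracket (List.append_ne_nil_of_right_ne_nil _ hy),
    eval_bracket (List.append_ne_nil_of_left_ne_nil hx _), eval_append, eval_append, eval_append,
    eval_bracket hx, eval_bracket hy,
    rbMul_bracketOp_bracketOp (eval_apply_nil hx) (eval_apply_nil hy)]
  simp only [map_add, map_smul]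

def IsReducible (w : Word Z) : Prop :=
  ∃ (q : Ctx Z) (x y : BWord Z), w = (q.subst (x.flr.cat y.flr)).1

lemma IsReducible.cons {w : Word Z} (l : BLtr Z) (hw : IsReducible w) : IsReducible (l :: w) := by
  obtain ⟨⟨L, R⟩ | ⟨L, R, q⟩, x, y, rfl⟩ := hw
  · exact ⟨.base (l :: L) R, x, y, rfl⟩
  · exact ⟨.deep (l :: L) R q, x, y, rfl⟩

lemma IsReducible.flr_cons {h : BLtr Z} {t : Word Z} (hw : IsReducible (h :: t)) (w : Word Z) :
    IsReducible (.flr h t :: w) := by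
  obtain ⟨q, x, y, hq⟩ := hw
  exact ⟨.deep [] w q, x, y, by simp [Ctx.subst_deep_val, ← hq]⟩

lemma isReducible_flr_flr (h : BLtr Z) (t : Word Z) (h' : BLtr Z) (t' w : Word Z) :
    IsReducible (.flr h t :: .flr h' t' :: w) :=
  ⟨.base [] w, ⟨h :: t, by simp⟩, ⟨h' :: t', by simp⟩, rfl⟩

lemma eval_of_not_isReducible {w : Word Z} (hw : ¬ IsReducible w) : eval lam w = single w 1 := by
  induction w using eval.induct with
  | case1 => exact eval_nil
  | case2 z w ih =>
    rw [eval, ih fun h => hw (h.cons _), rbMul_of_left, catMul_single_single]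
    simp
  | case3 h t w ih₁ ih₂ =>
    rw [eval, ih₁ fun h' => hw (h'.flr_cons w), ih₂ fun h' => hw (h'.cons _), bracketOp_single,
      bracket_cons, rbMul_single_single, one_mul, one_smul]
    rcases w with _ | ⟨_ | ⟨h', t'⟩, w⟩
    · exact mulWord_nil_right _
    · simpa [mapDomain_single, mulWord_of_right] using
        mulWord_concat_cons (lam := lam) [] (.flr h t) (.of _) w
    · exact absurd (isReducible_flr_flr h t h' t' w) hw

end Evaluation

section Invariant

variable {k : Type*} [Field k] (lam : k)

noncomputable def evalFinsupp : (BWord Z →₀ k) →ₗ[k] (Word Z →₀ k) :=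
  linearCombination k fun w => eval lam w.1

variable {lam}

lemma evalFinsupp_eq_of_rbStep {f g : BWord Z →₀ k} (h : RBStep lam f g) :
    evalFinsupp lam g = evalFinsupp lam f := by
  obtain ⟨q, x, y, -, rfl⟩ := h
  simp only [evalFinsupp, map_add, map_sub, map_smul, linearCombination_single, one_smul,
    eval_subst, eval_rbRewrite]
  abel

lemma evalFinsupp_of_irreducible {f : BWord Z →₀ k} (hf : ∀ g, ¬ RBStep lam f g) :
    evalFinsupp lam f = mapDomain Subtype.val f := by
  refine (linearCombination_apply k f).trans (sum_congr fun w hw => ?_)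
  rw [eval_of_not_isReducible, smul_single_one]
  rintro ⟨q, x, y, hq⟩
  obtain rfl : w = q.subst (x.flr.cat y.flr) := Subtype.ext hq
  exact hf _ ⟨q, x, y, mem_support_iff.1 hw, rfl⟩

end Invariant

section Termination

lemma weight_subst_lt (q : Ctx Z) {a b : BWord Z} (h : weight a.1 < weight b.1) :
    weight (q.subst a).1 < weight (q.subst b).1 := by
  induction q with
  | base l r =>
    simp only [Ctx.subst_base_val, weight_append]
    exact Nat.mul_lt_mul_of_pos_right (Nat.mul_lt_mul_of_pos_left h (weight_pos l)) (weight_pos r)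
  | deep l r q ih =>
    simp only [Ctx.subst_deep_val, weight_append, weight_bracket (q.subst _).2]
    exact Nat.mul_lt_mul_of_pos_right (Nat.mul_lt_mul_of_pos_left (by omega) (weight_pos l))
      (weight_pos r)

lemma weight_rbRewrite_lt (x y : BWord Z) :
    weight (BWord.flr (x.cat y.flr)).1 < weight (x.flr.cat y.flr).1 ∧
      weight (BWord.flr (x.flr.cat y)).1 < weight (x.flr.cat y.flr).1 ∧
      weight (BWord.flr (x.cat y)).1 < weight (x.flr.cat y.flr).1 := by
  have hx := weight_pos x.1
  have hy := weight_pos y.1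
  simp only [BWord.cat_val, BWord.flr_val, weight_append, weight_bracket x.2, weight_bracket y.2,
    weight_bracket (List.append_ne_nil_of_left_ne_nil x.2 _),
    weight_bracket (List.append_ne_nil_of_right_ne_nil _ y.2)]
  refine ⟨?_, ?_, ?_⟩ <;> nlinarith

variable {k : Type*} [Field k] {lam : k}

/-- Base `4` because a rewriting step trades one word for three lighter ones. -/
noncomputable def rbSize (f : BWord Z →₀ k) : ℕ := ∑ w ∈ f.support, 4 ^ weight w.1

lemma rbSize_lt_of_rbStep {f g : BWord Z →₀ k} (h : RBStep lam f g) : rbSize g < rbSize f := by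
  classical
  obtain ⟨q, x, y, hne, rfl⟩ := h
  obtain ⟨h₁, h₂, h₃⟩ := weight_rbRewrite_lt x y
  refine Finset.sum_pow_lt_of_subset_erase_union (fun w : BWord Z => weight w.1)
    (S := {q.subst (BWord.flr (x.cat y.flr)), q.subst (BWord.flr (x.flr.cat y)),
      q.subst (BWord.flr (x.cat y))})
    (mem_support_iff.2 hne) ?_ (Finset.card_le_three.trans_lt (by norm_num)) ?_
  · rw [← erase_eq_sub_single, ← support_erase]
    refine support_add.trans (Finset.union_subset_union le_rfl fun s hs => ?_)
    by_contra hs'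
    simp only [Finset.mem_insert, Finset.mem_singleton, not_or] at hs'
    simp_all [eq_comm]
  · simpa using ⟨weight_subst_lt q h₁, weight_subst_lt q h₂, weight_subst_lt q h₃⟩

end Termination

end RotaBaxter

/-- The rewriting system of the Rota-Baxter operator identity of weight `λ` is
convergent: terminating and confluent. -/
theorem rotaBaxter_rewriting_convergent {Z k : Type*} [Field k] (lam : k) :
    RelTerminating (RBStep (Z := Z) (k := k) lam) ∧
      RelConfluent (RBStep (Z := Z) (k := k) lam) := by
  have hwf := wellFounded_flip_of_measure_lt (r := RBStep (Z := Z) lam) RotaBaxter.rbSize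
    fun _ _ => RotaBaxter.rbSize_lt_of_rbStep
  refine ⟨relTerminating_of_wellFounded hwf, relConfluent_of_invariant hwf
    (RotaBaxter.evalFinsupp lam) (fun _ _ => RotaBaxter.evalFinsupp_eq_of_rbStep) ?_⟩
  intro f g hf hg hfg
  rw [RotaBaxter.evalFinsupp_of_irreducible hf, RotaBaxter.evalFinsupp_of_irreducible hg] at hfg
  exact Finsupp.mapDomain_injective Subtype.val_injective hfg
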